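/- arXiv:2206.13605 — 2 statements merged into one kernel-verified Lean document; each statement's English description precedes it below -/
import Mathlib

section
/- Let P, Q, S be points on the unit sphere S^d ⊂ R^{d+1} with P + Q ≠ 0. Then R_{P+Q}S = P + Q − S − 2[(S − P)·(S − Q)] I(P + Q), where I(x) := |x|^{-2} x is the inversion in the unit sphere and R_{P+Q} is the reflection with respect to the line spanned by P+Q. -/
open scoped RealInnerProductSpace
noncomputable section

/- Euclidean space `ℝ^{d+1}`. -/
abbrev E (d : ℕ) := EuclideanSpace ℝ (Fin (d + 1))

/- Reflection with respect to the line spanned by `Q` (with `sphRefl 0 = -id`). -/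
open Classical in
def sphRefl {d : ℕ} (Q P : E d) : E d :=
  if Q = 0 then -P else (2 * ⟪Q, P⟫ / ‖Q‖ ^ 2) • Q - P

/- Inversion in the unit sphere: `I(x) = |x|⁻² x`. -/
def isph {d : ℕ} (x : E d) : E d := (‖x‖ ^ 2)⁻¹ • x

/-! The coefficient `2⟪N, S⟫ / ‖N‖²` of `N` in `R_N S` is written as `1 - (‖N‖² - 2⟪N, S⟫) / ‖N‖²`;
for `N = P + Q` with `P, Q, S` unit vectors the numerator `‖N‖² - 2⟪N, S⟫` is `2⟪S - P, S - Q⟫`. -/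

theorem sphRefl_eq_sub_sub_smul_isph {d : ℕ} {N : E d} (hN : N ≠ 0) (S : E d) :
    sphRefl N S = N - S - (‖N‖ ^ 2 - 2 * ⟪N, S⟫) • isph N := by
  have hN2 : ‖N‖ ^ 2 ≠ 0 := by positivity
  rw [sphRefl, if_neg hN, isph, smul_smul, sub_mul, mul_inv_cancel₀ hN2, div_eq_mul_inv]
  module

theorem two_inner_sub_sub_eq_of_norm_eq_one {F : Type*} [NormedAddCommGroup F]
    [InnerProductSpace ℝ F] {P Q S : F} (hP : ‖P‖ = 1) (hQ : ‖Q‖ = 1) (hS : ‖S‖ = 1) :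
    2 * ⟪S - P, S - Q⟫ = ‖P + Q‖ ^ 2 - 2 * ⟪P + Q, S⟫ := by
  rw [← real_inner_self_eq_norm_sq]
  simp only [inner_sub_left, inner_sub_right, inner_add_left, inner_add_right,
    real_inner_self_eq_norm_sq, hP, hQ, hS]
  rw [real_inner_comm Q S, real_inner_comm P Q]
  ring

theorem refl_formula {d : ℕ} (P Q S : E d)
    (hP : ‖P‖ = 1) (hQ : ‖Q‖ = 1) (hS : ‖S‖ = 1) (hPQ : P + Q ≠ 0) :
    sphRefl (P + Q) S = P + Q - S - (2 * ⟪S - P, S - Q⟫) • isph (P + Q) := by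
  rw [sphRefl_eq_sub_sub_smul_isph hPQ, two_inner_sub_sub_eq_of_norm_eq_one hP hQ hS]
end
end

section
/- Let u_0, v_0 > 0 and f ∈ L^1([0,u_0] × [0,v_0]; R^{d+1}). Define φ(u,v) := ∫_0^u ∫_0^v f(w,z) dz dw. Then there is a Lebesgue-null set A ⊂ [0,u_0] such that for all u ∈ [0,u_0] \ A and all v ∈ [0,v_0], the partial derivative ∂_u φ(u,v) exists and equals ∫_0^v f(u,z) dz; moreover, the convergence of the difference quotients is uniform in v for each such u. -/
open scoped RealInnerProductSpace
noncomputable section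

/-!
Extend `f` by zero to `F` on `ℝ × ℝ`. By Fubini, almost every slice `F w = F(w, ·)` is integrable,
so `w ↦ F w` is a map into the separable metric space `L¹(ℝ)`. Lebesgue's differentiation theorem
holds for such maps (apply the scalar theorem to `w ↦ dist (F w) g` for `g` in a countable dense
set), so almost every `u` satisfies `⨍_{|w - u| ≤ r} ‖F w - F u‖₁ dw → 0` as `r → 0`. At such a
`u`, for every `v`,
`‖h⁻¹ (φ(u + h, v) - φ(u, v)) - ∫_0^v f(u, z) dz‖ ≤ |h|⁻¹ |∫_u^{u+h} ‖F w - F u‖₁ dw|`,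
and the right-hand side does not depend on `v`.
-/

open MeasureTheory Filter Metric Set Topology
open scoped ENNReal

theorem setAverage_le_setAverage_add_const {α : Type*} [MeasurableSpace α] {μ : Measure α}
    {f g : α → ℝ} {s : Set α} {c : ℝ} (hc : 0 ≤ c)
    (hs : μ s ≠ ⊤) (hf : IntegrableOn f s μ) (hg : IntegrableOn g s μ)
    (hfg : ∀ x, f x ≤ g x + c) :
    ⨍ x in s, f x ∂μ ≤ (⨍ x in s, g x ∂μ) + c := by
  have hconst : IntegrableOn (fun _ => c) s μ := integrableOn_const hs
  have hint : ∫ x in s, f x ∂μ ≤ (∫ x in s, g x ∂μ) + μ.real s * c := by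
    calc ∫ x in s, f x ∂μ ≤ ∫ x in s, (g x + c) ∂μ := setIntegral_mono hf (hg.add hconst) hfg
      _ = (∫ x in s, g x ∂μ) + μ.real s * c := by
        rw [integral_add hg hconst, setIntegral_const, smul_eq_mul]
  rw [setAverage_eq, setAverage_eq, smul_eq_mul, smul_eq_mul]
  rcases eq_or_lt_of_le (measureReal_nonneg (μ := μ) (s := s)) with h0 | hpos
  · simp [← h0, hc]
  · calc (μ.real s)⁻¹ * ∫ x in s, f x ∂μ
        ≤ (μ.real s)⁻¹ * ((∫ x in s, g x ∂μ) + μ.real s * c) := by gcongr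
      _ = (μ.real s)⁻¹ * ∫ x in s, g x ∂μ + c := by field_simp

section Slices

variable {α β G : Type*} [MeasurableSpace β] [NormedAddCommGroup G] {ν : Measure β}

open Classical in
def sliceL1 (F : α → β → G) (ν : Measure β) (w : α) : Lp G 1 ν :=
  if h : Integrable (F w) ν then h.toL1 (F w) else 0

theorem dist_sliceL1_of_integrable {F : α → β → G} {w : α} (hw : Integrable (F w) ν)
    (g : Lp G 1 ν) : dist (sliceL1 F ν w) g = ∫ z, ‖F w z - g z‖ ∂ν := by
  rw [sliceL1, dif_pos hw, L1.dist_eq_integral_dist]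
  refine integral_congr_ae ?_
  filter_upwards [hw.coeFn_toL1] with z hz
  rw [hz, dist_eq_norm]

theorem norm_sliceL1_le (F : α → β → G) (w : α) : ‖sliceL1 F ν w‖ ≤ ∫ z, ‖F w z‖ ∂ν := by
  by_cases hw : Integrable (F w) ν
  · rw [← dist_zero_right, dist_sliceL1_of_integrable hw]
    refine le_of_eq (integral_congr_ae ?_)
    filter_upwards [Lp.coeFn_zero G 1 ν] with z hz
    rw [hz, Pi.zero_apply, sub_zero]
  · rw [sliceL1, dif_neg hw, norm_zero]
    exact integral_nonneg fun _ => norm_nonneg _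

theorem norm_setIntegral_sub_le_dist_sliceL1 [NormedSpace ℝ G] {F : α → β → G} {w u : α}
    (hw : Integrable (F w) ν) (hu : Integrable (F u) ν) (s : Set β) :
    ‖∫ z in s, F w z ∂ν - ∫ z in s, F u z ∂ν‖ ≤ dist (sliceL1 F ν w) (sliceL1 F ν u) := by
  have hdist : dist (sliceL1 F ν w) (sliceL1 F ν u) = ∫ z, ‖F w z - F u z‖ ∂ν := by
    rw [dist_sliceL1_of_integrable hw, sliceL1, dif_pos hu]
    refine integral_congr_ae ?_
    filter_upwards [hu.coeFn_toL1] with z hz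
    rw [hz]
  rw [hdist, ← integral_sub hw.integrableOn hu.integrableOn]
  calc ‖∫ z in s, (F w z - F u z) ∂ν‖ ≤ ∫ z in s, ‖F w z - F u z‖ ∂ν :=
        norm_integral_le_integral_norm _
    _ ≤ ∫ z, ‖F w z - F u z‖ ∂ν :=
        setIntegral_le_integral (hw.sub hu).norm (Eventually.of_forall fun _ => norm_nonneg _)

variable [SFinite ν]

theorem locallyIntegrable_dist_sliceL1 [MeasurableSpace α] [TopologicalSpace α] {μ : Measure α}
    [IsLocallyFiniteMeasure μ] [SFinite μ] [NormedSpace ℝ G] {F : α → β → G}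
    (hF : Integrable (Function.uncurry F) (μ.prod ν)) (g : Lp G 1 ν) :
    LocallyIntegrable (fun w => dist (sliceL1 F ν w) g) μ := by
  have hmeas : AEStronglyMeasurable (fun w => ∫ z, ‖F w z - g z‖ ∂ν) μ :=
    (hF.aestronglyMeasurable.sub (Lp.aestronglyMeasurable g).comp_snd).norm.integral_prod_right'
  have hdom : LocallyIntegrable (fun w => (∫ z, ‖F w z‖ ∂ν) + ‖g‖) μ :=
    hF.integral_norm_prod_left.locallyIntegrable.add (locallyIntegrable_const _)
  refine hdom.mono (hmeas.congr ?_) (Eventually.of_forall fun w => ?_)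
  · filter_upwards [hF.prod_right_ae] with w hw
    exact (dist_sliceL1_of_integrable hw g).symm
  · rw [Real.norm_of_nonneg dist_nonneg, Real.norm_of_nonneg (by positivity)]
    calc dist (sliceL1 F ν w) g ≤ ‖sliceL1 F ν w‖ + ‖g‖ := dist_le_norm_add_norm _ _
      _ ≤ (∫ z, ‖F w z‖ ∂ν) + ‖g‖ := by gcongr; exact norm_sliceL1_le F w

theorem integrable_setIntegral_slice [MeasurableSpace α] {μ : Measure α} [NormedSpace ℝ G]
    {F : α → β → G}
    (hF : Integrable (Function.uncurry F) (μ.prod ν)) (s : Set β) :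
    Integrable (fun w => ∫ z in s, F w z ∂ν) μ :=
  (hF.mono_measure (Measure.prod_mono le_rfl Measure.restrict_le_self)).integral_prod_left

end Slices

section LebesgueDifferentiation

variable {α : Type*} [PseudoMetricSpace α] [ProperSpace α] [SecondCountableTopology α]
  [MeasurableSpace α] [BorelSpace α] {μ : Measure α} [IsLocallyFiniteMeasure μ]
  [IsUnifLocDoublingMeasure μ]

theorem ae_tendsto_average_dist {X : Type*} [PseudoMetricSpace X]
    [TopologicalSpace.SeparableSpace X] {Φ : α → X}
    (hΦ : ∀ x, LocallyIntegrable (fun w => dist (Φ w) x) μ) :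
    ∀ᵐ u ∂μ, Tendsto (fun r => ⨍ w in closedBall u r, dist (Φ w) (Φ u) ∂μ) (𝓝[>] 0) (𝓝 0) := by
  obtain ⟨S, hS, hSdense⟩ := TopologicalSpace.exists_countable_dense X
  have hleb : ∀ᵐ u ∂μ, ∀ x ∈ S, Tendsto
      (fun r => ⨍ w in closedBall u r, ‖dist (Φ w) x - dist (Φ u) x‖ ∂μ) (𝓝[>] 0) (𝓝 0) := by
    refine (ae_ball_iff hS).2 fun x _ => ?_
    filter_upwards [IsUnifLocDoublingMeasure.ae_tendsto_average_norm_sub μ (hΦ x) 1] with u hu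
    refine hu (fun _ => u) id tendsto_id ?_
    filter_upwards [self_mem_nhdsWithin] with r hr
    simpa using le_of_lt hr
  filter_upwards [hleb] with u hu
  refine Metric.tendsto_nhds.2 fun ε hε => ?_
  obtain ⟨x, hxS, hx⟩ := hSdense.exists_dist_lt (Φ u) (show 0 < ε / 3 by positivity)
  filter_upwards [(hu x hxS).eventually_lt_const (show ε / 3 > 0 by positivity)] with r hr
  have hball := isCompact_closedBall u r
  have hfin := (measure_closedBall_lt_top (μ := μ) (x := u) (r := r)).ne
  have hbound : ⨍ w in closedBall u r, dist (Φ w) (Φ u) ∂μ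
      ≤ (⨍ w in closedBall u r, ‖dist (Φ w) x - dist (Φ u) x‖ ∂μ) + 2 * dist (Φ u) x := by
    refine setAverage_le_setAverage_add_const (by positivity) hfin
      ((hΦ (Φ u)).integrableOn_isCompact hball)
      (((hΦ x).integrableOn_isCompact hball).sub (integrableOn_const hfin)).norm fun w => ?_
    rw [Real.norm_eq_abs]
    linarith [dist_triangle_right (Φ w) (Φ u) x, le_abs_self (dist (Φ w) x - dist (Φ u) x)]
  have hnonneg : 0 ≤ ⨍ w in closedBall u r, dist (Φ w) (Φ u) ∂μ :=
    integral_nonneg fun _ => dist_nonneg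
  rw [Real.dist_0_eq_abs, abs_of_nonneg hnonneg]
  linarith

theorem ae_tendsto_average_dist_sliceL1 {β G : Type*} [MeasurableSpace β] [NormedAddCommGroup G]
    [NormedSpace ℝ G] [TopologicalSpace.SeparableSpace G] {ν : Measure β} [SFinite ν]
    [IsSeparable ν] {F : α → β → G} (hF : Integrable (Function.uncurry F) (μ.prod ν)) :
    ∀ᵐ u ∂μ, Tendsto (fun r => ⨍ w in closedBall u r, dist (sliceL1 F ν w) (sliceL1 F ν u) ∂μ)
      (𝓝[>] 0) (𝓝 0) :=
  haveI : Fact ((1 : ℝ≥0∞) ≠ ∞) := ⟨ENNReal.one_ne_top⟩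
  ae_tendsto_average_dist (locallyIntegrable_dist_sliceL1 hF)

end LebesgueDifferentiation

section Real

variable {β G : Type*} [MeasurableSpace β] [NormedAddCommGroup G] [NormedSpace ℝ G]
  {ν : Measure β} [SFinite ν]

theorem uIoc_add_subset_closedBall (u h : ℝ) : uIoc u (u + h) ⊆ closedBall u |h| := by
  rw [Real.closedBall_eq_Icc]
  refine uIoc_subset_uIcc.trans (uIcc_subset_Icc ?_ ?_) <;>
    constructor <;> linarith [abs_nonneg h, le_abs_self h, neg_abs_le h]

theorem norm_intervalIntegral_setIntegral_sub_le {F : ℝ → β → G}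
    (hF : Integrable (Function.uncurry F) (volume.prod ν)) {u : ℝ} (hu : Integrable (F u) ν)
    (h : ℝ) (s : Set β) :
    ‖∫ w in u..u + h, (∫ z in s, F w z ∂ν - ∫ z in s, F u z ∂ν)‖
      ≤ 2 * |h| * ⨍ w in closedBall u |h|, dist (sliceL1 F ν w) (sliceL1 F ν u) := by
  have hball : IntegrableOn (fun w => dist (sliceL1 F ν w) (sliceL1 F ν u)) (closedBall u |h|) :=
    (locallyIntegrable_dist_sliceL1 hF _).integrableOn_isCompact (isCompact_closedBall u |h|)
  have hG : IntegrableOn (fun w => ∫ z in s, F w z ∂ν - ∫ z in s, F u z ∂ν) (uIoc u (u + h)) :=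
    (integrable_setIntegral_slice hF s).integrableOn.sub (integrableOn_const measure_Ioc_lt_top.ne)
  calc ‖∫ w in u..u + h, (∫ z in s, F w z ∂ν - ∫ z in s, F u z ∂ν)‖
      ≤ ∫ w in uIoc u (u + h), ‖∫ z in s, F w z ∂ν - ∫ z in s, F u z ∂ν‖ :=
        intervalIntegral.norm_integral_le_integral_norm_uIoc
    _ ≤ ∫ w in uIoc u (u + h), dist (sliceL1 F ν w) (sliceL1 F ν u) := by
        refine setIntegral_mono_ae hG.norm (hball.mono_set (uIoc_add_subset_closedBall u h)) ?_
        filter_upwards [hF.prod_right_ae] with w hw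
        exact norm_setIntegral_sub_le_dist_sliceL1 hw hu s
    _ ≤ ∫ w in closedBall u |h|, dist (sliceL1 F ν w) (sliceL1 F ν u) :=
        setIntegral_mono_set hball (Eventually.of_forall fun _ => dist_nonneg)
          (uIoc_add_subset_closedBall u h).eventuallyLE
    _ = 2 * |h| * ⨍ w in closedBall u |h|, dist (sliceL1 F ν w) (sliceL1 F ν u) := by
        rcases eq_or_ne h 0 with rfl | h0
        · simp
        rw [setAverage_eq, smul_eq_mul, measureReal_def, Real.volume_closedBall,
          ENNReal.toReal_ofReal (by positivity), ← mul_assoc, mul_inv_cancel₀ (by positivity),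
          one_mul]

theorem exists_forall_norm_slope_setIntegral_sub_le [CompleteSpace G] {F : ℝ → β → G}
    (hF : Integrable (Function.uncurry F) (volume.prod ν)) {u : ℝ} (hu : Integrable (F u) ν)
    (hleb : Tendsto (fun r => ⨍ w in closedBall u r, dist (sliceL1 F ν w) (sliceL1 F ν u))
      (𝓝[>] 0) (𝓝 0))
    {ε : ℝ} (hε : 0 < ε) :
    ∃ δ > 0, ∀ h : ℝ, h ≠ 0 → |h| < δ → ∀ s : Set β,
      ‖h⁻¹ • (∫ w in u..u + h, ∫ z in s, F w z ∂ν) - ∫ z in s, F u z ∂ν‖ ≤ ε := by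
  obtain ⟨δ, hδ, hsmall⟩ := Metric.mem_nhdsWithin_iff.1 (hleb (Iio_mem_nhds (half_pos hε)))
  refine ⟨δ, hδ, fun h h0 hhδ s => ?_⟩
  have hpos : 0 < |h| := abs_pos.2 h0
  have havg : ⨍ w in closedBall u |h|, dist (sliceL1 F ν w) (sliceL1 F ν u) < ε / 2 :=
    hsmall (show |h| ∈ ball 0 δ ∩ Ioi 0 from ⟨by simpa using hhδ, hpos⟩)
  have hsub : h⁻¹ • (∫ w in u..u + h, ∫ z in s, F w z ∂ν) - ∫ z in s, F u z ∂ν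
      = h⁻¹ • ∫ w in u..u + h, (∫ z in s, F w z ∂ν - ∫ z in s, F u z ∂ν) := by
    rw [intervalIntegral.integral_sub (integrable_setIntegral_slice hF s).intervalIntegrable
      intervalIntegrable_const, intervalIntegral.integral_const, add_sub_cancel_left, smul_sub,
      smul_smul, inv_mul_cancel₀ h0, one_smul]
  rw [hsub, norm_smul, norm_inv, Real.norm_eq_abs]
  calc |h|⁻¹ * ‖∫ w in u..u + h, (∫ z in s, F w z ∂ν - ∫ z in s, F u z ∂ν)‖
      ≤ |h|⁻¹ * (2 * |h| * ⨍ w in closedBall u |h|, dist (sliceL1 F ν w) (sliceL1 F ν u)) := by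
        gcongr; exact norm_intervalIntegral_setIntegral_sub_le hF hu h s
    _ = 2 * ⨍ w in closedBall u |h|, dist (sliceL1 F ν w) (sliceL1 F ν u) := by
        field_simp
    _ ≤ ε := by linarith

end Real

open MeasureTheory in
theorem exists_partial_derivative_general {d : ℕ} (u0 v0 : ℝ)
    (f : ℝ → ℝ → E d)
    (hf : IntegrableOn (fun p : ℝ × ℝ => f p.1 p.2) (Set.Icc 0 u0 ×ˢ Set.Icc 0 v0))
    (φ : ℝ → ℝ → E d)
    (hφ : ∀ u v, φ u v = ∫ w in (0 : ℝ)..u, ∫ z in (0 : ℝ)..v, f w z) :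
    ∃ A : Set ℝ, A ⊆ Set.Icc 0 u0 ∧ volume A = 0 ∧
      ∀ u ∈ Set.Icc (0 : ℝ) u0 \ A, ∀ ε > (0 : ℝ), ∃ δ > (0 : ℝ),
        ∀ h : ℝ, h ≠ 0 → |h| < δ → u + h ∈ Set.Icc (0 : ℝ) u0 →
          ∀ v ∈ Set.Icc (0 : ℝ) v0,
            ‖h⁻¹ • (φ (u + h) v - φ u v) - ∫ z in (0 : ℝ)..v, f u z‖ ≤ ε := by
  set F : ℝ → ℝ → E d := fun w z => (Icc 0 u0 ×ˢ Icc 0 v0).indicator (Function.uncurry f) (w, z)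
  have hF : Integrable (Function.uncurry F) (volume.prod volume) := by
    rw [← Measure.volume_eq_prod]
    exact (integrable_indicator_iff (measurableSet_Icc.prod measurableSet_Icc)).2 hf
  have hslice : ∀ w ∈ Icc 0 u0, ∀ v ∈ Icc 0 v0, ∫ z in 0..v, f w z = ∫ z in Ioc 0 v, F w z := by
    intro w hw v hv
    rw [intervalIntegral.integral_of_le hv.1]
    refine setIntegral_congr_fun measurableSet_Ioc fun z hz => ?_
    have hwz : (w, z) ∈ Icc 0 u0 ×ˢ Icc 0 v0 := ⟨hw, hz.1.le, hz.2.trans hv.2⟩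
    simp only [F, indicator_of_mem hwz, Function.uncurry_apply_pair]
  have hgood : ∀ᵐ u, Integrable (F u) volume ∧
      Tendsto (fun r => ⨍ w in closedBall u r, dist (sliceL1 F volume w) (sliceL1 F volume u))
        (𝓝[>] 0) (𝓝 0) :=
    hF.prod_right_ae.and (ae_tendsto_average_dist_sliceL1 hF)
  refine ⟨Icc 0 u0 ∩ {u | ¬ _}, inter_subset_left, measure_mono_null inter_subset_right hgood, ?_⟩
  rintro u ⟨hu, hgu⟩ ε hε
  obtain ⟨hFu, hleb⟩ := not_not.1 fun h => hgu ⟨hu, h⟩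
  obtain ⟨δ, hδ, hslope⟩ := exists_forall_norm_slope_setIntegral_sub_le hF hFu hleb hε
  refine ⟨δ, hδ, fun h h0 hhδ huh v hv => ?_⟩
  have hφF : ∀ t ∈ Icc 0 u0, φ t v = ∫ w in 0..t, ∫ z in Ioc 0 v, F w z := fun t ht => by
    rw [hφ]
    refine intervalIntegral.integral_congr fun w hw => hslice w ?_ v hv
    rw [uIcc_of_le ht.1] at hw
    exact Icc_subset_Icc_right ht.2 hw
  rw [hφF _ huh, hφF _ hu, intervalIntegral.integral_interval_sub_left
    (integrable_setIntegral_slice hF _).intervalIntegrable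
    (integrable_setIntegral_slice hF _).intervalIntegrable, hslice u hu v hv]
  exact hslope h h0 hhδ _

open MeasureTheory in
/-- Almost everywhere existence of the partial derivative `∂_u φ`, uniformly in `v`,
for `φ(u,v) = ∫_0^u ∫_0^v f`. -/
theorem exists_partial_derivative {d : ℕ} (u0 v0 : ℝ) (hu0 : 0 < u0) (hv0 : 0 < v0)
    (f : ℝ → ℝ → E d)
    (hf : IntegrableOn (fun p : ℝ × ℝ => f p.1 p.2) (Set.Icc 0 u0 ×ˢ Set.Icc 0 v0))
    (φ : ℝ → ℝ → E d)
    (hφ : ∀ u v, φ u v = ∫ w in (0 : ℝ)..u, ∫ z in (0 : ℝ)..v, f w z) :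
    ∃ A : Set ℝ, A ⊆ Set.Icc 0 u0 ∧ volume A = 0 ∧
      ∀ u ∈ Set.Icc (0 : ℝ) u0 \ A, ∀ ε > (0 : ℝ), ∃ δ > (0 : ℝ),
        ∀ h : ℝ, h ≠ 0 → |h| < δ → u + h ∈ Set.Icc (0 : ℝ) u0 →
          ∀ v ∈ Set.Icc (0 : ℝ) v0,
            ‖h⁻¹ • (φ (u + h) v - φ u v) - ∫ z in (0 : ℝ)..v, f u z‖ ≤ ε :=
  exists_partial_derivative_general u0 v0 f hf φ hφ
end
end
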